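/- arXiv:2205.07163 — 3 statements merged into one kernel-verified Lean document; each statement's English description precedes it below -/
import Mathlib

section
/- For every integer m ≥ 1 and all complex numbers y₁, …, y_m and w, the complete Bell polynomials satisfy Y_m(y₁ − w, y₂ − w²/2, y₃ − w³/3, …, y_m − w^m/m) = Y_m(y₁, …, y_m) − w·Y_{m−1}(y₁, …, y_{m−1}). -/
open MeasureTheory Filter Set Topology

/-- Complete Bell polynomial `Y_m(y₁, …, y_m) = Σ ∏_{j=1}^m y_j^{k_j}/k_j!`, the sum over
all non-negative integers `k₁, …, k_m` with `k₁ + 2k₂ + ⋯ + m·k_m = m`. -/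
noncomputable def bellY (m : ℕ) (y : ℕ → ℂ) : ℂ :=
  ∑ k ∈ (Fintype.piFinset fun _ : Fin m => Finset.range (m + 1)).filter
      (fun k => ∑ j : Fin m, ((j : ℕ) + 1) * k j = m),
    ∏ j : Fin m, y ((j : ℕ) + 1) ^ (k j) / ((k j).factorial : ℂ)

/-!
Put `F_m(y) = ∏_{k=1}^m exp (y_k X^k) = exp (y₁ X + ⋯ + y_m X^m)` in `ℂ⟦X⟧`; its coefficient of
`X^d` is `Y_d(y)` for every `d ≤ m`. As `F_m` turns sums of sequences into products,
`F_m(y) = F_m(y - w^k/k) · G` with `G = F_m(w^k/k)`, the exponential of the truncation at degree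
`m` of `-log (1 - w X)`. Hence `(1 - w X) G ≡ 1 mod X^(m+1)`, which is checked by differentiating:
`((1 - w X) G)' = -w (w X)^m G`. So `F_m(y - w^k/k) ≡ (1 - w X) F_m(y) mod X^(m+1)`, and the
coefficients of `X^m` give the identity.
-/

open PowerSeries Finset

theorem Finset.dvd_prod_sub_prod {R ι : Type*} [CommRing R] {a : R} (s : Finset ι)
    {f g : ι → R} (h : ∀ i ∈ s, a ∣ f i - g i) : a ∣ ∏ i ∈ s, f i - ∏ i ∈ s, g i := by
  simp_rw [← Ideal.mem_span_singleton, ← Ideal.Quotient.eq, map_prod] at h ⊢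
  exact prod_congr rfl h

namespace PowerSeries

theorem coeff_eq_of_X_pow_dvd_sub {R : Type*} [CommRing R] {f g : R⟦X⟧} {n d : ℕ}
    (h : X ^ n ∣ f - g) (hd : d < n) : coeff d f = coeff d g :=
  sub_eq_zero.mp <| by rw [← map_sub]; exact X_pow_dvd_iff.mp h d hd

theorem derivative_prod_eq_sum_mul_prod {R ι : Type*} [CommSemiring R] (s : Finset ι)
    {f g : ι → R⟦X⟧} (h : ∀ i ∈ s, d⁄dX R (f i) = g i * f i) :
    d⁄dX R (∏ i ∈ s, f i) = (∑ i ∈ s, g i) * ∏ i ∈ s, f i := by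
  classical
  induction s using Finset.induction_on with
  | empty => simp
  | insert i s hi ih =>
    rw [prod_insert hi, sum_insert hi, Derivation.leibniz, smul_eq_mul, smul_eq_mul,
      h i (mem_insert_self i s), ih fun j hj => h j (mem_insert_of_mem hj)]
    ring

theorem X_pow_succ_dvd_sub_C_constantCoeff {R : Type*} [CommRing R] [IsAddTorsionFree R]
    {f : R⟦X⟧} {m : ℕ} (h : X ^ m ∣ d⁄dX R f) : X ^ (m + 1) ∣ f - C (constantCoeff f) := by
  rw [X_pow_dvd_iff]
  rintro (_ | n) hn
  · simp
  · have hcoeff := X_pow_dvd_iff.mp h n (by omega)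
    rw [coeff_derivative, ← Nat.cast_succ, mul_comm, ← nsmul_eq_mul] at hcoeff
    simpa using (smul_eq_zero.mp hcoeff).resolve_left n.succ_ne_zero

section ExpMonomial

variable {A : Type*} [CommRing A] [Algebra ℚ A] (c : A) {k : ℕ}

theorem derivative_rescale_exp : d⁄dX A (rescale c (exp A)) = C c * rescale c (exp A) := by
  ext n
  simp only [coeff_derivative, coeff_rescale, coeff_exp, coeff_C_mul, Nat.factorial_succ]
  have h : algebraMap ℚ A (1 / ((n + 1) * n.factorial : ℕ)) * (n + 1) =
      algebraMap ℚ A (1 / n.factorial) := by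
    rw [show (n + 1 : A) = algebraMap ℚ A (n + 1) by simp, ← map_mul]
    congr 1
    push_cast
    field_simp
  rw [pow_succ, mul_assoc, mul_assoc, h]
  ring

noncomputable def expMonomial (c : A) (k : ℕ) : A⟦X⟧ :=
  (rescale c (exp A)).subst (X ^ k : A⟦X⟧)

theorem expMonomial_eq_expand (hk : k ≠ 0) :
    expMonomial c k = expand k hk (rescale c (exp A)) :=
  (expand_apply k hk _).symm

theorem coeff_expMonomial (hk : k ≠ 0) (n : ℕ) :
    coeff n (expMonomial c k) =
      if k ∣ n then algebraMap ℚ A (1 / (n / k).factorial) * c ^ (n / k) else 0 := by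
  rw [expMonomial_eq_expand c hk, coeff_expand, coeff_rescale, coeff_exp, mul_comm]

theorem constantCoeff_expMonomial (hk : k ≠ 0) : constantCoeff (expMonomial c k) = 1 := by
  simp [← coeff_zero_eq_constantCoeff_apply, coeff_expMonomial c hk]

theorem X_pow_dvd_expMonomial_sub_one (hk : k ≠ 0) : X ^ k ∣ expMonomial c k - 1 := by
  rw [X_pow_dvd_iff]
  rintro (_ | n) hn
  · simp [constantCoeff_expMonomial c hk]
  · rw [map_sub, coeff_expMonomial c hk, if_neg (Nat.not_dvd_of_pos_of_lt n.succ_pos hn)]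
    simp

theorem X_pow_dvd_expMonomial_sub_sum (hk : k ≠ 0) (N : ℕ) :
    X ^ (N + 1) ∣ expMonomial c k -
      ∑ q ∈ range (N + 1), C (algebraMap ℚ A (1 / q.factorial) * c ^ q) * X ^ (k * q) := by
  have hk' : 0 < k := Nat.pos_of_ne_zero hk
  rw [X_pow_dvd_iff]
  intro n hn
  rw [map_sub, map_sum, sub_eq_zero, coeff_expMonomial c hk]
  simp only [coeff_C_mul_X_pow]
  split_ifs with h
  · obtain ⟨q, rfl⟩ := h
    have hq : q < N + 1 := (Nat.le_mul_of_pos_left q hk').trans_lt hn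
    simp_rw [Nat.mul_div_cancel_left q hk', Nat.mul_left_cancel_iff hk', sum_ite_eq,
      if_pos (mem_range.mpr hq)]
  · refine (sum_eq_zero fun q _ => if_neg ?_).symm
    rintro rfl
    exact h (dvd_mul_right k q)

theorem expMonomial_mul_expMonomial (hk : k ≠ 0) (a b : A) :
    expMonomial a k * expMonomial b k = expMonomial (a + b) k := by
  simp only [expMonomial_eq_expand _ hk, ← map_mul, exp_mul_exp_eq_exp_add]

theorem derivative_expMonomial (hk : k ≠ 0) :
    d⁄dX A (expMonomial c k) = C (k * c) * X ^ (k - 1) * expMonomial c k := by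
  rw [expMonomial, derivative_subst (HasSubst.X_pow hk), ← expand_apply _ hk,
    derivative_rescale_exp, map_mul, expand_C, ← expMonomial_eq_expand c hk, derivative_pow,
    derivative_X, ← expMonomial, map_mul, map_natCast]
  ring

end ExpMonomial

section BellSeries

variable {A : Type*} [CommRing A] [Algebra ℚ A]

noncomputable def bellSeries (m : ℕ) (y : ℕ → A) : A⟦X⟧ :=
  ∏ j ∈ range m, expMonomial (y (j + 1)) (j + 1)

theorem bellSeries_add (m : ℕ) (y z : ℕ → A) :
    bellSeries m (y + z) = bellSeries m y * bellSeries m z := by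
  rw [bellSeries, bellSeries, bellSeries, ← prod_mul_distrib]
  exact prod_congr rfl fun j _ => (expMonomial_mul_expMonomial (Nat.add_one_ne_zero j) _ _).symm

theorem coeff_bellSeries_of_le {d m : ℕ} (h : d ≤ m) (y : ℕ → A) :
    coeff d (bellSeries m y) = coeff d (bellSeries d y) := by
  induction m, h using Nat.le_induction with
  | base => rfl
  | succ m hdm ih =>
    rw [← ih]
    refine coeff_eq_of_X_pow_dvd_sub ?_ (Nat.lt_succ_self d)
    rw [bellSeries, prod_range_succ, ← bellSeries, ← mul_sub_one]
    exact (pow_dvd_pow X (by omega)).trans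
      (dvd_mul_of_dvd_right (X_pow_dvd_expMonomial_sub_one _ (Nat.add_one_ne_zero m)) _)

theorem derivative_bellSeries (m : ℕ) (y : ℕ → A) :
    d⁄dX A (bellSeries m y) =
      (∑ j ∈ range m, C (((j + 1 : ℕ) : A) * y (j + 1)) * X ^ j) * bellSeries m y :=
  derivative_prod_eq_sum_mul_prod _ fun j _ => by
    rw [derivative_expMonomial _ (Nat.add_one_ne_zero j), Nat.add_sub_cancel]

end BellSeries

theorem X_pow_succ_dvd_one_sub_mul_bellSeries_sub_one {K : Type*} [Field K] [CharZero K]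
    (w : K) (m : ℕ) :
    X ^ (m + 1) ∣ (1 - C w * X) * bellSeries m (fun k => w ^ k / k) - 1 := by
  set G := bellSeries m fun k => w ^ k / k
  have hG : d⁄dX K G = C w * (∑ j ∈ range m, (C w * X) ^ j) * G := by
    rw [derivative_bellSeries, mul_sum]
    congr 1
    refine sum_congr rfl fun j _ => ?_
    rw [mul_pow, ← map_pow, ← mul_assoc, ← map_mul]
    congr 2
    field_simp
    ring
  have hP : d⁄dX K ((1 - C w * X) * G) = -(C w * (C w * X) ^ m) * G := by
    rw [Derivation.leibniz, hG, smul_eq_mul, smul_eq_mul, map_sub, Derivation.leibniz]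
    simp only [derivative_one, derivative_C, derivative_X, smul_eq_mul]
    linear_combination (C w * G) * mul_neg_geom_sum (C w * X) m
  have hdvd : X ^ m ∣ d⁄dX K ((1 - C w * X) * G) :=
    ⟨-(C w * C w ^ m) * G, by rw [hP, mul_pow]; ring⟩
  have h0 : constantCoeff ((1 - C w * X) * G) = 1 := by
    simp [G, bellSeries, map_prod, constantCoeff_expMonomial]
  simpa [h0] using X_pow_succ_dvd_sub_C_constantCoeff hdvd

end PowerSeries

theorem coeff_bellSeries_eq_bellY (m : ℕ) (y : ℕ → ℂ) : coeff m (bellSeries m y) = bellY m y := by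
  -- modulo `X^(m+1)` the factors of `bellSeries m y` are the polynomials `T j`, and expanding
  -- their product gives the sum defining `bellY`
  set T : Fin m → ℂ⟦X⟧ := fun j => ∑ q ∈ range (m + 1),
    C (algebraMap ℚ ℂ (1 / q.factorial) * y (j + 1) ^ q) * X ^ ((j + 1) * q)
  have htrunc : coeff m (bellSeries m y) = coeff m (∏ j, T j) := by
    refine coeff_eq_of_X_pow_dvd_sub ?_ (Nat.lt_succ_self m)
    rw [bellSeries, prod_range]
    exact dvd_prod_sub_prod _ fun j _ =>
      X_pow_dvd_expMonomial_sub_sum _ (Nat.add_one_ne_zero j) m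
  rw [htrunc, prod_univ_sum, map_sum, bellY, sum_filter]
  refine sum_congr rfl fun k _ => ?_
  rw [prod_mul_distrib, ← map_prod, prod_pow_eq_pow_sum, coeff_C_mul_X_pow]
  simp [eq_comm, div_eq_inv_mul]

/-- **Shift identity for the complete Bell polynomials:**
`Y_m(y₁ - w, y₂ - w²/2, …, y_m - w^m/m) = Y_m(y₁, …, y_m) - w·Y_{m-1}(y₁, …, y_{m-1})`. -/
theorem bellY_shift (m : ℕ) (hm : 1 ≤ m) (y : ℕ → ℂ) (w : ℂ) :
    bellY m (fun k => y k - w ^ k / (k : ℂ)) = bellY m y - w * bellY (m - 1) y := by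
  obtain ⟨n, rfl⟩ : ∃ n, m = n + 1 := ⟨m - 1, by omega⟩
  set a : ℕ → ℂ := fun k => y k - w ^ k / (k : ℂ)
  have hsplit :
      bellSeries (n + 1) y = bellSeries (n + 1) a * bellSeries (n + 1) fun k => w ^ k / k := by
    rw [← bellSeries_add]
    congr 1
    ext k
    simp [a]
  have hcong :
      X ^ (n + 1 + 1) ∣ (1 - C w * X) * bellSeries (n + 1) y - bellSeries (n + 1) a := by
    obtain ⟨T, hT⟩ := X_pow_succ_dvd_one_sub_mul_bellSeries_sub_one w (n + 1)
    exact ⟨bellSeries (n + 1) a * T, by rw [hsplit]; linear_combination bellSeries (n + 1) a * hT⟩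
  have hcoeff := coeff_eq_of_X_pow_dvd_sub hcong (Nat.lt_succ_self (n + 1))
  rw [sub_mul, one_mul, mul_assoc, map_sub, coeff_C_mul, coeff_succ_X_mul,
    coeff_bellSeries_of_le n.le_succ, coeff_bellSeries_eq_bellY, coeff_bellSeries_eq_bellY,
    coeff_bellSeries_eq_bellY] at hcoeff
  exact hcoeff.symm
end

section
/- Let n ≥ 0 be an integer, N ∈ ℂ with Re N > n + 1, s > 0, α ∈ ℝ, σ = s·e^{iα}, and z ∈ ℂ∖{0} with |α + arg z| < π. Then F^{(2)}(z; N, σ, N − n, σe^{−πi}) = (−1)^n · e^{πiN} · ∫_0^{∞} u^{N−n−1}·(1+u)^{−(2N−n−1)} · F^{(1)}((1+u)·z; 2N − n − 1, σ) du, where the powers of u and 1+u are real powers on (0, ∞). -/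
/-!
Rotate both rays onto `(0, ∞)`. With `w = z e^{-i(π-α)}`, which keeps a positive distance from
`[0, ∞)` because `|α + arg z| < π`, the inner integral at `t₁ = r e^{i(π-α)}` becomes, up to a
phase, `∫₀^∞ e^{-st} t^{N₂-1} / (r + t) dt`. Substituting `t = r u`, swapping the two integrations
and substituting `r = x / (1 + u)` gives
`∫₀^∞ u^{N₂-1} (1+u)^{-(N₁+N₂-1)} ∫₀^∞ e^{-sx} x^{N₁+N₂-2} / ((1+u)w - x) dx du`,
whose inner integral is `F^{(1)}((1+u)z; N₁+N₂-1, σ)` up to a phase. Fubini applies because the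
integrand is dominated by `r^{Re(N₁+N₂)-2} u^{Re N₂-1} e^{-sr(1+u)} / dist(w, [0, ∞))`, whose
`u`-sections integrate to `Γ(Re N₂) s^{-Re N₂} r^{Re N₁-2} e^{-sr}`; this needs `Re N₁ > 1`.
For `N₁ = N`, `N₂ = N - n` the phases combine to `(-1)^n e^{πiN}`.
-/

open MeasureTheory Filter Set Topology

/-- Iterated "hyperterminant-type" ray integral. Each list entry `(N, β)` contributes an
integration along the ray `arg t = π - α - β`, with exponential factor `e^{σ e^{iβ} t}`
(where `σ = s e^{iα}`) and power `t^{N-1}` taken with `arg t = π - α - β`. The denominator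
is `p - t` where `p` is the previous integration variable (or `z` at the outermost level). -/
noncomputable def iterInt : List (ℂ × ℝ) → ℝ → ℝ → ℂ → ℂ
  | [], _, _, _ => 1
  | (N, β) :: rest, s, α, p =>
      ∫ r in Set.Ioi (0 : ℝ),
        (Complex.exp (((s : ℂ) * Complex.exp (Complex.I * ((α + β : ℝ) : ℂ))) *
              ((r : ℂ) * Complex.exp (Complex.I * ((Real.pi - α - β : ℝ) : ℂ)))) *
            Complex.exp ((N - 1) * ((Real.log r : ℂ) + Complex.I * ((Real.pi - α - β : ℝ) : ℂ))) /
            (p - (r : ℂ) * Complex.exp (Complex.I * ((Real.pi - α - β : ℝ) : ℂ)))) *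
          Complex.exp (Complex.I * ((Real.pi - α - β : ℝ) : ℂ)) *
          iterInt rest s α ((r : ℂ) * Complex.exp (Complex.I * ((Real.pi - α - β : ℝ) : ℂ)))

/-- The first-level hyperterminant `F^{(1)}(z; N, σ)` with `σ = s e^{iα}`. -/
noncomputable def F1 (z N : ℂ) (s α : ℝ) : ℂ := iterInt [(N, 0)] s α z

/-- Attach to the parameters `N₁, …, N_m` the contour rotations `(m-k)ε`, `k = 1, …, m`. -/
noncomputable def withAngles (Ns : List ℂ) (ε : ℝ) : List (ℂ × ℝ) :=
  List.zipWith (fun i N => (N, ((Ns.length - 1 - i : ℕ) : ℝ) * ε)) (List.range Ns.length) Ns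

/-- The `ε`-regularized `m`-th level hyperterminant with equal singulants `σ = s e^{iα}`:
its limit as `ε → 0⁺` is `F^{(m)}(z; N₁, …, N_m; σ)`. -/
noncomputable def FmEps (Ns : List ℂ) (s α ε : ℝ) (z : ℂ) : ℂ := iterInt (withAngles Ns ε) s α z

open Complex
open scoped Real

lemma exists_pos_le_norm_sub_ofReal {w : ℂ} (hw : -w ∈ slitPlane) :
    ∃ d > 0, ∀ r : ℝ, 0 ≤ r → d ≤ ‖w - r‖ := by
  rcases mem_slitPlane_iff.1 hw with hre | him
  · refine ⟨-w.re, by simpa using hre, fun r hr => ?_⟩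
    calc -w.re ≤ |(w - r).re| := by
          rw [sub_re, ofReal_re]; exact (neg_le_abs _).trans' (by simp at hre; linarith)
      _ ≤ ‖w - r‖ := abs_re_le_norm _
  · refine ⟨|w.im|, abs_pos.2 (by simpa using him), fun r _ => ?_⟩
    simpa using abs_im_le_norm (w - r)

lemma mul_exp_mem_slitPlane {α : ℝ} {z : ℂ} (hz : z ≠ 0) (harg : |α + arg z| < π) :
    z * exp (α * I) ∈ slitPlane := by
  have hθ : arg z + α ∈ Set.Ioo (-π) π := by
    rw [Set.mem_Ioo, ← abs_lt, add_comm]; exact harg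
  have hpolar : z * exp (α * I) = ‖z‖ * exp ((arg z + α : ℝ) * I) := by
    conv_lhs => rw [← norm_mul_exp_arg_mul_I z]
    rw [mul_assoc, ← exp_add]; push_cast; ring_nf
  rw [mem_slitPlane_iff_arg, hpolar, arg_real_mul _ (norm_pos_iff.2 hz), arg_exp_mul_I,
    toIocMod_eq_self _ |>.2 ⟨hθ.1, by linarith [hθ.2]⟩]
  exact ⟨hθ.2.ne, mul_ne_zero (by exact_mod_cast (norm_pos_iff.2 hz).ne') (exp_ne_zero _)⟩

lemma integrableOn_rpow_mul_exp_neg_mul {s b : ℝ} (hs : -1 < s) (hb : 0 < b) :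
    IntegrableOn (fun x : ℝ => x ^ s * Real.exp (-(b * x))) (Ioi 0) := by
  simpa [Real.rpow_one] using integrableOn_rpow_mul_exp_neg_mul_rpow hs zero_lt_one hb

lemma integrable_rpow_mul_rpow_mul_exp_neg_mul_one_add {s a b : ℝ} (hs : 0 < s) (ha : 1 < a)
    (hb : 0 < b) :
    Integrable (fun p : ℝ × ℝ => p.1 ^ (a + b - 2) * p.2 ^ (b - 1) *
        Real.exp (-(s * (p.1 * (1 + p.2)))))
      ((volume.restrict (Ioi 0)).prod (volume.restrict (Ioi 0))) := by
  have hsection : ∀ r : ℝ, (fun u : ℝ => r ^ (a + b - 2) * u ^ (b - 1) *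
      Real.exp (-(s * (r * (1 + u))))) =
        fun u => (r ^ (a + b - 2) * Real.exp (-(s * r))) *
          (u ^ (b - 1) * Real.exp (-(s * r * u))) := by
    intro r; ext u
    rw [show -(s * (r * (1 + u))) = -(s * r) + -(s * r * u) by ring, Real.exp_add]; ring
  rw [integrable_prod_iff (by fun_prop : Measurable _).aestronglyMeasurable]
  constructor
  · filter_upwards [ae_restrict_mem measurableSet_Ioi] with r hr
    rw [hsection r]
    exact (integrableOn_rpow_mul_exp_neg_mul (by linarith) (mul_pos hs hr)).const_mul _
  · refine Integrable.congr
      ((integrableOn_rpow_mul_exp_neg_mul (s := a - 2) (by linarith) hs).const_mul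
        ((1 / s) ^ b * Real.Gamma b)) ?_
    filter_upwards [ae_restrict_mem measurableSet_Ioi] with r (hr : 0 < r)
    have hnorm : ∀ u ∈ Ioi (0 : ℝ),
        ‖r ^ (a + b - 2) * u ^ (b - 1) * Real.exp (-(s * (r * (1 + u))))‖ =
          r ^ (a + b - 2) * u ^ (b - 1) * Real.exp (-(s * (r * (1 + u)))) :=
      fun u (hu : 0 < u) => Real.norm_of_nonneg (by positivity)
    rw [setIntegral_congr_fun measurableSet_Ioi hnorm, hsection r, integral_const_mul,
      Real.integral_rpow_mul_exp_neg_mul_Ioi hb (mul_pos hs hr)]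
    have hsplit : (1 / (s * r)) ^ b = (1 / s) ^ b * (r ^ b)⁻¹ := by
      rw [← Real.inv_rpow hr.le, ← Real.mul_rpow (by positivity) (by positivity)]; field_simp
    have hpow : r ^ (a + b - 2) = r ^ (a - 2) * r ^ b := by
      rw [← Real.rpow_add hr]; ring_nf
    rw [hsplit, hpow]
    field_simp

noncomputable def laplaceStieltjes (s : ℝ) (M w : ℂ) : ℂ :=
  ∫ x in Ioi (0 : ℝ), Real.exp (-(s * x)) * (x : ℂ) ^ (M - 1) / (w - x)

/-- The integrand of the double integral after substituting `t = r u` in the inner one. -/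
noncomputable def mixedKernel (s : ℝ) (a b w : ℂ) (r u : ℝ) : ℂ :=
  Real.exp (-(s * (r * (1 + u)))) * (r : ℂ) ^ (a + b - 2) * (u : ℂ) ^ (b - 1) / ((1 + u) * (w - r))

lemma norm_mixedKernel_le {s d r u : ℝ} {a b w : ℂ} (hr : 0 < r) (hu : 0 < u) (hd : 0 < d)
    (hdist : d ≤ ‖w - r‖) :
    ‖mixedKernel s a b w r u‖ ≤
      r ^ (a.re + b.re - 2) * u ^ (b.re - 1) * Real.exp (-(s * (r * (1 + u)))) / d := by
  have hden : d ≤ ‖(1 + u : ℂ) * (w - r)‖ := by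
    rw [norm_mul, show (1 + u : ℂ) = ((1 + u : ℝ) : ℂ) by push_cast; rfl, norm_real,
      Real.norm_of_nonneg (by positivity)]
    nlinarith [norm_nonneg (w - r)]
  rw [mixedKernel, norm_div, norm_mul, norm_mul, norm_cpow_eq_rpow_re_of_pos hr,
    norm_cpow_eq_rpow_re_of_pos hu, norm_real, Real.norm_of_nonneg (Real.exp_pos _).le]
  simp only [sub_re, add_re, one_re, show (2 : ℂ).re = 2 from rfl]
  rw [show Real.exp (-(s * (r * (1 + u)))) * r ^ (a.re + b.re - 2) * u ^ (b.re - 1) =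
    r ^ (a.re + b.re - 2) * u ^ (b.re - 1) * Real.exp (-(s * (r * (1 + u)))) by ring]
  exact div_le_div_of_nonneg_left (by positivity) hd hden

lemma integrable_mixedKernel {s : ℝ} {a b w : ℂ} (hs : 0 < s) (ha : 1 < a.re) (hb : 0 < b.re)
    (hw : -w ∈ slitPlane) :
    Integrable (Function.uncurry (mixedKernel s a b w))
      ((volume.restrict (Ioi 0)).prod (volume.restrict (Ioi 0))) := by
  obtain ⟨d, hd, hdist⟩ := exists_pos_le_norm_sub_ofReal hw
  refine ((integrable_rpow_mul_rpow_mul_exp_neg_mul_one_add hs ha hb).div_const d).mono'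
    (by unfold mixedKernel; fun_prop : Measurable _).aestronglyMeasurable ?_
  rw [Measure.prod_restrict]
  filter_upwards [ae_restrict_mem (measurableSet_Ioi.prod measurableSet_Ioi)]
    with ⟨r, u⟩ ⟨hr, hu⟩
  exact norm_mixedKernel_le hr hu hd (hdist r (le_of_lt hr))

lemma laplaceStieltjes_neg_ofReal (s : ℝ) (b : ℂ) {r : ℝ} (hr : 0 < r) :
    laplaceStieltjes s b (-r) = -((r : ℂ) ^ (b - 1) *
      ∫ u in Ioi (0 : ℝ), Real.exp (-(s * (r * u))) * (u : ℂ) ^ (b - 1) / (1 + u)) := by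
  have hsubst := integral_comp_mul_left_Ioi'
    (fun x : ℝ => (Real.exp (-(s * x)) * (x : ℂ) ^ (b - 1) / (-r - x) : ℂ)) 0 hr
  rw [mul_zero] at hsubst
  rw [laplaceStieltjes, ← hsubst, ← integral_const_mul, ← integral_neg, ← integral_smul]
  refine setIntegral_congr_fun measurableSet_Ioi fun u (hu : 0 < u) => ?_
  have hr' : (r : ℂ) ≠ 0 := by exact_mod_cast hr.ne'
  have hu' : (1 + u : ℂ) ≠ 0 := by exact_mod_cast (by linarith : (0 : ℝ) < 1 + u).ne'
  simp only [real_smul, ofReal_mul, mul_cpow_ofReal_nonneg hr.le hu.le]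
  rw [show -(r : ℂ) - r * u = -(r * (1 + u)) by ring]
  field_simp

lemma mul_laplaceStieltjes_neg_eq_integral_mixedKernel (s : ℝ) (a b w : ℂ) {r : ℝ} (hr : 0 < r) :
    Real.exp (-(s * r)) * (r : ℂ) ^ (a - 1) / (w - r) * laplaceStieltjes s b (-r) =
      -∫ u in Ioi (0 : ℝ), mixedKernel s a b w r u := by
  rw [laplaceStieltjes_neg_ofReal s b hr, mul_neg, ← integral_const_mul, ← integral_const_mul]
  congr 1
  refine setIntegral_congr_fun measurableSet_Ioi fun u _ => ?_
  have hpow : (r : ℂ) ^ (a + b - 2) = (r : ℂ) ^ (a - 1) * (r : ℂ) ^ (b - 1) := by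
    rw [← cpow_add _ _ (by exact_mod_cast hr.ne')]; ring_nf
  rw [mixedKernel, hpow, show -(s * (r * (1 + u))) = -(s * r) + -(s * (r * u)) by ring,
    Real.exp_add, ofReal_mul]
  push_cast
  field_simp

lemma integral_mixedKernel_eq_laplaceStieltjes (s : ℝ) (a b w : ℂ) {u : ℝ} (hu : 0 < u) :
    ∫ r in Ioi (0 : ℝ), mixedKernel s a b w r u =
      (u : ℂ) ^ (b - 1) * (1 + u : ℂ) ^ (-(a + b - 1)) *
        laplaceStieltjes s (a + b - 1) ((1 + u) * w) := by
  have h1u : (0 : ℝ) < 1 + u := by linarith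
  have hsubst := integral_comp_mul_left_Ioi' (fun r => mixedKernel s a b w r u) 0 (inv_pos.2 h1u)
  rw [mul_zero] at hsubst
  rw [← hsubst, laplaceStieltjes, ← integral_const_mul, ← integral_smul]
  refine setIntegral_congr_fun measurableSet_Ioi fun x (hx : 0 < x) => ?_
  have hcast : ((1 + u : ℝ) : ℂ) = 1 + u := by push_cast; rfl
  have hc : (1 + u : ℂ) ≠ 0 := by rw [← hcast]; exact_mod_cast h1u.ne'
  have hcpow : (1 + u : ℂ) ^ (a + b - 2) ≠ 0 := cpow_ne_zero_iff.2 (Or.inl hc)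
  have hinv_pow : (((1 + u)⁻¹ : ℝ) : ℂ) ^ (a + b - 2) = ((1 + u : ℂ) ^ (a + b - 2))⁻¹ := by
    rw [ofReal_inv, inv_cpow _ _ (by rw [arg_ofReal_of_nonneg h1u.le]; exact Real.pi_pos.ne), hcast]
  have hneg_pow : (1 + u : ℂ) ^ (-(a + b - 1)) = ((1 + u : ℂ) ^ (a + b - 2) * (1 + u))⁻¹ := by
    rw [cpow_neg, show a + b - 1 = (a + b - 2) + 1 by ring, cpow_add _ _ hc, cpow_one]
  rw [mixedKernel, ofReal_mul, mul_cpow_ofReal_nonneg (inv_nonneg.2 h1u.le) hx.le, hinv_pow,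
    hneg_pow, show (1 + u)⁻¹ * x * (1 + u) = x by field_simp,
    show a + b - 1 - 1 = a + b - 2 by ring]
  simp only [real_smul]
  push_cast
  field_simp

theorem integral_mul_laplaceStieltjes_neg {s : ℝ} {a b w : ℂ} (hs : 0 < s) (ha : 1 < a.re)
    (hb : 0 < b.re) (hw : -w ∈ slitPlane) :
    ∫ r in Ioi (0 : ℝ), Real.exp (-(s * r)) * (r : ℂ) ^ (a - 1) / (w - r) *
        laplaceStieltjes s b (-r) =
      -∫ u in Ioi (0 : ℝ), (u : ℂ) ^ (b - 1) * (1 + u : ℂ) ^ (-(a + b - 1)) *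
        laplaceStieltjes s (a + b - 1) ((1 + u) * w) := by
  calc _ = -∫ r in Ioi (0 : ℝ), ∫ u in Ioi (0 : ℝ), mixedKernel s a b w r u := by
        rw [← integral_neg]
        exact setIntegral_congr_fun measurableSet_Ioi fun r hr =>
          mul_laplaceStieltjes_neg_eq_integral_mixedKernel s a b w hr
    _ = -∫ u in Ioi (0 : ℝ), ∫ r in Ioi (0 : ℝ), mixedKernel s a b w r u := by
        rw [integral_integral_swap (integrable_mixedKernel hs ha hb hw)]
    _ = _ := by
        congr 1
        exact setIntegral_congr_fun measurableSet_Ioi fun u hu =>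
          integral_mixedKernel_eq_laplaceStieltjes s a b w hu

lemma iterInt_cons_eq (N : ℂ) (β : ℝ) (rest : List (ℂ × ℝ)) (s α : ℝ) (p : ℂ) :
    iterInt ((N, β) :: rest) s α p =
      exp ((N - 1) * (I * ((π - α - β : ℝ) : ℂ))) *
        ∫ r in Ioi (0 : ℝ), Real.exp (-(s * r)) * (r : ℂ) ^ (N - 1) /
            (p * exp (-(I * ((π - α - β : ℝ) : ℂ))) - r) *
          iterInt rest s α (r * exp (I * ((π - α - β : ℝ) : ℂ))) := by
  rw [iterInt, ← integral_const_mul]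
  refine setIntegral_congr_fun measurableSet_Ioi fun r (hr : 0 < r) => ?_
  set E := exp (I * ((π - α - β : ℝ) : ℂ)) with hE
  have hphase : (s : ℂ) * exp (I * ((α + β : ℝ) : ℂ)) * (r * E) = ((-(s * r) : ℝ) : ℂ) := by
    rw [hE, mul_mul_mul_comm, ← exp_add, show I * ((α + β : ℝ) : ℂ) + I * ((π - α - β : ℝ) : ℂ) =
      π * I by push_cast; ring, exp_pi_mul_I]
    push_cast; ring
  have hpow : exp ((N - 1) * ((Real.log r : ℂ) + I * ((π - α - β : ℝ) : ℂ))) =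
      (r : ℂ) ^ (N - 1) * exp ((N - 1) * (I * ((π - α - β : ℝ) : ℂ))) := by
    rw [cpow_def_of_ne_zero (by exact_mod_cast hr.ne'), ← ofReal_log hr.le, ← exp_add]; ring_nf
  have hden : p - r * E = (p * exp (-(I * ((π - α - β : ℝ) : ℂ))) - r) * E := by
    rw [sub_mul, mul_assoc, ← exp_add, neg_add_cancel, exp_zero, mul_one]
  have hE0 : E ≠ 0 := exp_ne_zero _
  rw [hphase, hpow, hden, ofReal_exp]
  field_simp

lemma iterInt_singleton (N : ℂ) (β s α : ℝ) (p : ℂ) :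
    iterInt [(N, β)] s α p =
      exp ((N - 1) * (I * ((π - α - β : ℝ) : ℂ))) *
        laplaceStieltjes s N (p * exp (-(I * ((π - α - β : ℝ) : ℂ)))) := by
  simp only [iterInt_cons_eq, iterInt.eq_1, mul_one, laplaceStieltjes]

lemma F1_eq_laplaceStieltjes (z M : ℂ) (s α : ℝ) :
    F1 z M s α = exp ((M - 1) * (I * ((π - α : ℝ) : ℂ))) *
      laplaceStieltjes s M (z * exp (-(I * ((π - α : ℝ) : ℂ)))) := by
  rw [F1, iterInt_singleton, sub_zero]

lemma iterInt_pair_neg_pi (N N' : ℂ) (s α : ℝ) (z : ℂ) :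
    iterInt [(N, 0), (N', -π)] s α z =
      exp ((N - 1) * (I * ((π - α : ℝ) : ℂ))) * exp ((N' - 1) * (I * ((π - α : ℝ) : ℂ) + π * I)) *
        ∫ r in Ioi (0 : ℝ), Real.exp (-(s * r)) * (r : ℂ) ^ (N - 1) /
            (z * exp (-(I * ((π - α : ℝ) : ℂ))) - r) * laplaceStieltjes s N' (-r) := by
  rw [iterInt_cons_eq, sub_zero, mul_assoc]
  congr 1
  rw [← integral_const_mul]
  refine setIntegral_congr_fun measurableSet_Ioi fun r _ => ?_
  have hangle : ((π - α - -π : ℝ) : ℂ) = ((π - α : ℝ) : ℂ) + π := by push_cast; ring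
  have hrot : (r : ℂ) * exp (I * ((π - α : ℝ) : ℂ)) * exp (-(I * ((π - α - -π : ℝ) : ℂ))) = -r := by
    rw [mul_assoc, ← exp_add, hangle, show I * ((π - α : ℝ) : ℂ) + -(I * (((π - α : ℝ) : ℂ) + π)) =
      -(π * I) by ring, exp_neg, exp_pi_mul_I]
    ring
  rw [iterInt_singleton, hrot, hangle, mul_add I, mul_comm I (π : ℂ)]
  ring

/-- **Beta-type representation of the mixed second-level hyperterminant:**
`F^{(2)}(z; N, σ, N-n, σe^{-πi}) = (-1)^n e^{πiN} ∫_0^∞ u^{N-n-1}(1+u)^{-(2N-n-1)}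
F^{(1)}((1+u)z; 2N-n-1, σ) du`, the powers of `u` and `1+u` being real powers on `(0, ∞)`. -/
theorem mixed_hyperterminant_rep (n : ℕ) (N : ℂ) (hN : (n : ℝ) + 1 < N.re)
    (s : ℝ) (hs : 0 < s) (α : ℝ) (z : ℂ) (hz : z ≠ 0)
    (harg : |α + Complex.arg z| < Real.pi) :
    iterInt [(N, 0), (N - (n : ℂ), -Real.pi)] s α z =
      (-1 : ℂ) ^ n * Complex.exp ((Real.pi : ℂ) * Complex.I * N) *
        ∫ u in Set.Ioi (0 : ℝ),
          (u : ℂ) ^ (N - (n : ℂ) - 1) * ((1 : ℂ) + (u : ℂ)) ^ (-(2 * N - (n : ℂ) - 1)) *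
            F1 (((1 : ℂ) + (u : ℂ)) * z) (2 * N - (n : ℂ) - 1) s α := by
  have ha : 1 < N.re := by linarith [n.cast_nonneg (α := ℝ)]
  have hb : 0 < (N - n).re := by simp only [sub_re, natCast_re]; linarith
  have hw : -(z * exp (-(I * ((π - α : ℝ) : ℂ)))) ∈ slitPlane := by
    convert mul_exp_mem_slitPlane hz harg using 1
    rw [← mul_neg, show -(I * ((π - α : ℝ) : ℂ)) = α * I + -(π * I) by push_cast; ring, exp_add,
      exp_neg, exp_pi_mul_I]
    ring
  have hphase : exp ((N - 1) * (I * ((π - α : ℝ) : ℂ))) *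
      exp ((N - n - 1) * (I * ((π - α : ℝ) : ℂ) + π * I)) =
        -((-1) ^ n * exp (π * I * N) * exp ((N + (N - n) - 1 - 1) * (I * ((π - α : ℝ) : ℂ)))) := by
    rw [← neg_one_mul, ← exp_pi_mul_I, ← exp_nat_mul, ← exp_add, ← exp_add, ← exp_add, ← exp_add,
      exp_eq_exp_iff_exists_int]
    exact ⟨-(n + 1), by push_cast; ring⟩
  rw [iterInt_pair_neg_pi, integral_mul_laplaceStieltjes_neg hs ha hb hw,
    show 2 * N - n - 1 = N + (N - n) - 1 by ring, hphase, neg_mul_neg, mul_assoc,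
    ← integral_const_mul]
  congr 2 with u
  rw [F1_eq_laplaceStieltjes, mul_assoc (1 + (u : ℂ)) z]
  ring
end

section
/- Let n ≥ 0 be an integer, N ∈ ℂ with Re N > n + 1, s > 0, α ∈ ℝ, σ = s·e^{iα}, and z ∈ ℂ∖{0} with |α + arg z| < π. Then F^{(2)}(z; N, σ, N − n, σe^{πi}) = e^{−2πiN} · F^{(2)}(z; N, σ, N − n, σe^{−πi}). -/
open MeasureTheory Filter Set Topology

/-!
The two contours of the inner integral are the same ray, `arg t₂ = -α` and `arg t₂ = 2π - α`;
only the branch of `t₂^{N-n-1}` differs, by the factor `e^{-2πi(N-n-1)} = e^{-2πiN}`. Hence the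
inner integrals agree up to that constant for every value of `t₁`, and it factors out of the
outer integral.
-/

namespace Hyperterminant

open Complex

lemma exp_I_mul_ofReal_sub_two_pi (x : ℝ) :
    exp (I * ((x - 2 * Real.pi : ℝ) : ℂ)) = exp (I * (x : ℂ)) := by
  rw [ofReal_sub, mul_sub, ofReal_mul, ofReal_ofNat,
    show I * (2 * (Real.pi : ℂ)) = 2 * Real.pi * I by ring]
  exact exp_periodic.sub_eq _

lemma exp_neg_two_pi_I_mul_sub_natCast (N : ℂ) (n : ℕ) :
    exp (-2 * Real.pi * I * (N - n)) = exp (-2 * Real.pi * I * N) := by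
  rw [show -2 * Real.pi * I * (N - n) = -2 * Real.pi * I * N + n * (2 * Real.pi * I) by ring,
    exp_add, exp_nat_mul_two_pi_mul_I, mul_one]

lemma iterInt_cons_add_two_pi (M : ℂ) (β : ℝ) (rest : List (ℂ × ℝ)) (s α : ℝ) (p : ℂ) :
    iterInt ((M, β + 2 * Real.pi) :: rest) s α p =
      exp (-2 * Real.pi * I * M) * iterInt ((M, β) :: rest) s α p := by
  have hray : Real.pi - α - (β + 2 * Real.pi) = Real.pi - α - β - 2 * Real.pi := by ring
  have hsing : α + (β + 2 * Real.pi) = α + β + 2 * Real.pi := by ring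
  have hbranch (r : ℝ) :
      exp ((M - 1) * ((Real.log r : ℂ) + I * ((Real.pi - α - β - 2 * Real.pi : ℝ) : ℂ))) =
        exp (-2 * Real.pi * I * M) *
          exp ((M - 1) * ((Real.log r : ℂ) + I * ((Real.pi - α - β : ℝ) : ℂ))) := by
    rw [← exp_add]
    refine (exp_periodic.int_mul (-1) _).symm.trans (congrArg exp ?_)
    push_cast
    ring
  simp only [iterInt, hray, hsing, exp_I_mul_ofReal_sub_two_pi, hbranch,
    ← exp_I_mul_ofReal_sub_two_pi (α + β + 2 * Real.pi), add_sub_cancel_right]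
  rw [← integral_const_mul]
  congr 1 with r
  ring

lemma iterInt_cons_eq_mul_of_forall (c N : ℂ) (β : ℝ) (l₁ l₂ : List (ℂ × ℝ)) (s α : ℝ) (p : ℂ)
    (h : ∀ q, iterInt l₁ s α q = c * iterInt l₂ s α q) :
    iterInt ((N, β) :: l₁) s α p = c * iterInt ((N, β) :: l₂) s α p := by
  simp only [iterInt, h]
  rw [← integral_const_mul]
  congr 1 with r
  ring

end Hyperterminant

open Hyperterminant in
theorem mixed_hyperterminant_reflection_general (n : ℕ) (N : ℂ)
    (s : ℝ) (α : ℝ) (z : ℂ) :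
    iterInt [(N, 0), (N - (n : ℂ), Real.pi)] s α z =
      Complex.exp (-2 * (Real.pi : ℂ) * Complex.I * N) *
        iterInt [(N, 0), (N - (n : ℂ), -Real.pi)] s α z := by
  refine iterInt_cons_eq_mul_of_forall _ _ _ _ _ _ _ _ fun q => ?_
  have h := iterInt_cons_add_two_pi (N - n) (-Real.pi) [] s α q
  rwa [show -Real.pi + 2 * Real.pi = Real.pi by ring, exp_neg_two_pi_I_mul_sub_natCast] at h

/-- **Reflection identity for the mixed second-level hyperterminants:**
`F^{(2)}(z; N, σ, N-n, σe^{πi}) = e^{-2πiN}·F^{(2)}(z; N, σ, N-n, σe^{-πi})`. -/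
theorem mixed_hyperterminant_reflection (n : ℕ) (N : ℂ) (hN : (n : ℝ) + 1 < N.re)
    (s : ℝ) (hs : 0 < s) (α : ℝ) (z : ℂ) (hz : z ≠ 0)
    (harg : |α + Complex.arg z| < Real.pi) :
    iterInt [(N, 0), (N - (n : ℂ), Real.pi)] s α z =
      Complex.exp (-2 * (Real.pi : ℂ) * Complex.I * N) *
        iterInt [(N, 0), (N - (n : ℂ), -Real.pi)] s α z :=
  mixed_hyperterminant_reflection_general n N s α z
end
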